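/- The Gerstenhaber coproduct T agrees with the simplicial (Alexander–Whitney) coproduct Δ on the subcomplex spanned by tuples with product e: for σ = (g_0, ..., g_m) with g_0 g_1 ⋯ g_m = e, T(σ) = Δ(σ), where Δ(σ) = Σ_{p=0}^m (g_{p+1} ⋯ g_m g_0, g_1, ..., g_p) ⊗ (g_0 g_1 ⋯ g_p, g_{p+1}, ..., g_m). -/
import Mathlib


/-- The chain group `C_n = k[G]^{⊗(n+1)}`, a free `k`-module on tuples of group elements. -/
abbrev HC (k G : Type) [CommRing k] (n : ℕ) : Type := (Fin (n + 1) → G) →₀ k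

/-- `C_p ⊗ C_q`, a free `k`-module on pairs of tuples of group elements. -/
abbrev HD (k G : Type) [CommRing k] (p q : ℕ) : Type :=
  ((Fin (p + 1) → G) × (Fin (q + 1) → G)) →₀ k

/-- The bidegree `(p, q)` component of the coproduct `T : C_m → ⊕_{p+q=m} C_p ⊗ C_q`,
`T(g_0, …, g_m) = Σ_p Σ_{h ∈ G} (h, g_1, …, g_p) ⊗ (g_0 h⁻¹, g_{p+1}, …, g_m)`. -/
noncomputable def Tcomp (k G : Type) [CommRing k] [Group G] [Fintype G] (p q : ℕ) :
    HC k G (p + q) →ₗ[k] HD k G p q :=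
  Finsupp.lift (HD k G p q) k (Fin (p + q + 1) → G) fun σ =>
    ∑ h : G,
      Finsupp.single
        (Fin.cases (motive := fun _ => G) h
            (fun j : Fin p => σ ⟨j.1 + 1, by have := j.isLt; omega⟩),
          Fin.cases (motive := fun _ => G) (σ 0 * h⁻¹)
            (fun j : Fin q => σ ⟨p + j.1 + 1, by have := j.isLt; omega⟩)) 1

/-- The projection of `C_p ⊗ C_q` onto the span of pairs of tuples each having
product `e` (killing all other basis elements). -/
noncomputable def projE (k G : Type) [CommRing k] [Group G] [DecidableEq G] (p q : ℕ) :
    HD k G p q →ₗ[k] HD k G p q :=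
  Finsupp.lift (HD k G p q) k ((Fin (p + 1) → G) × (Fin (q + 1) → G)) fun τ =>
    if (List.ofFn τ.1).prod = 1 ∧ (List.ofFn τ.2).prod = 1 then Finsupp.single τ 1
    else 0

/-- On tuples `σ = (g_0,…,g_m)` with `g_0 g_1 ⋯ g_m = e`, the Gerstenhaber coproduct
`T` (corestricted to the subcomplex of product-`e` tuples) agrees with the simplicial
Alexander–Whitney coproduct `Δ`: in bidegree `(p, q)` it is
`(g_{p+1} ⋯ g_m g_0, g_1,…,g_p) ⊗ (g_0 g_1 ⋯ g_p, g_{p+1},…,g_m)`. -/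
theorem Tcomp_eq_AW_on_BG (k G : Type) [Field k] [Group G] [Fintype G] [DecidableEq G]
    (p q : ℕ) (σ : Fin (p + q + 1) → G) (hσ : (List.ofFn σ).prod = 1) :
    projE k G p q (Tcomp k G p q (Finsupp.single σ 1)) =
      Finsupp.single
        (Fin.cases (motive := fun _ => G)
            ((List.ofFn fun j : Fin q =>
                σ ⟨p + j.1 + 1, by have := j.isLt; omega⟩).prod * σ 0)
            (fun j : Fin p => σ ⟨j.1 + 1, by have := j.isLt; omega⟩),
          Fin.cases (motive := fun _ => G)
            ((List.ofFn fun j : Fin (p + 1) => σ (Fin.castLE (by omega) j)).prod)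
            (fun j : Fin q => σ ⟨p + j.1 + 1, by have := j.isLt; omega⟩)) 1 := by
  classical
  set A := (List.ofFn fun j : Fin p => σ ⟨j.1 + 1, by have := j.isLt; omega⟩).prod with hA
  set B := (List.ofFn fun j : Fin q => σ ⟨p + j.1 + 1, by have := j.isLt; omega⟩).prod with hB
  have key : σ 0 * A * B = 1 := by
    have h1 : (List.ofFn σ).prod
        = σ 0 * (List.ofFn fun i : Fin (p + q) => σ i.succ).prod := by
      rw [List.ofFn_succ]; simp
    have h2 : (List.ofFn fun i : Fin (p + q) => σ i.succ).prod = A * B := by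
      rw [List.ofFn_add, List.prod_append, hA, hB]
      rfl
    rw [h1, h2, ← mul_assoc] at hσ
    exact hσ
  have hhead : (List.ofFn fun j : Fin (p + 1) => σ (Fin.castLE (by omega) j)).prod
      = σ 0 * A := by
    rw [List.ofFn_succ, List.prod_cons, hA]
    rfl
  -- compute LHS
  rw [Tcomp]
  rw [Finsupp.lift_apply, Finsupp.sum_single_index (by simp), one_smul, map_sum]
  have hproj : ∀ τ : ((Fin (p + 1) → G) × (Fin (q + 1) → G)),
      projE k G p q (Finsupp.single τ 1)
        = if (List.ofFn τ.1).prod = 1 ∧ (List.ofFn τ.2).prod = 1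
          then Finsupp.single τ 1 else 0 := by
    intro τ
    rw [projE, Finsupp.lift_apply, Finsupp.sum_single_index (by simp), one_smul]
  simp only [hproj]
  rw [Finset.sum_eq_single A⁻¹]
  · have hc : ((List.ofFn (Fin.cases (motive := fun _ => G) A⁻¹
        (fun j : Fin p => σ ⟨j.1 + 1, by have := j.isLt; omega⟩))).prod = 1 ∧
        (List.ofFn (Fin.cases (motive := fun _ => G) (σ 0 * A⁻¹⁻¹)
        (fun j : Fin q => σ ⟨p + j.1 + 1, by have := j.isLt; omega⟩))).prod = 1) := by
      constructor
      · rw [List.ofFn_succ, List.prod_cons]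
        simp only [Fin.cases_zero, Fin.cases_succ, ← hA]
        exact inv_mul_cancel A
      · rw [List.ofFn_succ, List.prod_cons]
        simp only [Fin.cases_zero, Fin.cases_succ, ← hB, inv_inv]
        exact key
    rw [if_pos hc]
    congr 2
    · funext i
      induction i using Fin.cases with
      | zero =>
        simp only [Fin.cases_zero]
        have h3 : A * (B * σ 0) = 1 := by
          have := congrArg (fun x => (σ 0)⁻¹ * (x * σ 0)) key
          simpa [mul_assoc] using this
        exact inv_eq_of_mul_eq_one_right h3
      | succ j => simp
    · funext i
      induction i using Fin.cases with
      | zero => simp only [Fin.cases_zero, inv_inv, hhead]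
      | succ j => simp
  · intro h _ hne
    rw [if_neg]
    rintro ⟨h1, -⟩
    apply hne
    rw [List.ofFn_succ, List.prod_cons] at h1
    simp only [Fin.cases_zero, Fin.cases_succ, ← hA] at h1
    exact eq_inv_of_mul_eq_one_left h1
  · intro h; exact absurd (Finset.mem_univ _) h
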